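/- Let f : [0,1]^d → R be non-negative, differentiable, up-concave, and fix a base point u ∈ [0,1]^d. For z ∈ [0,1] write x_z = (z/2)·(x − u) + u. Then for all x, y ∈ [0,1]^d and z ∈ [0,1]: f(x_z ∨ y) ≥ (1 − z/2)(1 − ||u||_∞) f(y). -/

import Mathlib

open scoped RealInnerProductSpace

/-- The unit box `[0,1]^d` in Euclidean space. -/
def unitBox (d : ℕ) : Set (EuclideanSpace ℝ (Fin d)) :=
  {x | ∀ i, x i ∈ Set.Icc (0 : ℝ) 1}

/-- Coordinatewise maximum of two vectors in Euclidean space. -/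
noncomputable def vecSup {d : ℕ} (x y : EuclideanSpace ℝ (Fin d)) : EuclideanSpace ℝ (Fin d) :=
  WithLp.toLp 2 (fun i => max (x i) (y i))

/-- The sup norm `‖x‖_∞ = max_i |x_i|`. -/
noncomputable def supNorm {d : ℕ} (x : EuclideanSpace ℝ (Fin d)) : ℝ :=
  ⨆ i, |x i|

/-!
Write `w = v ∨ y` and `m = ‖v‖_∞ ∈ (0, 1)`. Every coordinate of `w - y` is at most
`m (1 - y_i)`, so the ray from `y` through `w` stays in the box up to
`p = y + m⁻¹ (w - y)`. Up-concavity along the increasing chain `y ≤ w ≤ p` gives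
`(m⁻¹ - 1) f(y) ≤ m⁻¹ f(w) - f(p) ≤ m⁻¹ f(w)`, that is `(1 - m) f(y) ≤ f(w)`.
For `v = x_z` the sup norm is at most `z/2 + (1 - z/2) ‖u‖_∞`, which gives the bound.
-/

variable {d : ℕ}

def UpConcaveOn (f : EuclideanSpace ℝ (Fin d) → ℝ)
    (g : EuclideanSpace ℝ (Fin d) → EuclideanSpace ℝ (Fin d))
    (s : Set (EuclideanSpace ℝ (Fin d))) : Prop :=
  ∀ a ∈ s, ∀ b ∈ s, (∀ i, a i ≤ b i) →
    ⟪g b, b - a⟫ ≤ f b - f a ∧ f b - f a ≤ ⟪g a, b - a⟫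

@[simp]
lemma vecSup_apply (x y : EuclideanSpace ℝ (Fin d)) (i : Fin d) :
    vecSup x y i = max (x i) (y i) :=
  rfl

lemma vecSup_mem_unitBox {x y : EuclideanSpace ℝ (Fin d)} (hx : x ∈ unitBox d)
    (hy : y ∈ unitBox d) : vecSup x y ∈ unitBox d := fun i =>
  ⟨le_max_of_le_left (hx i).1, max_le (hx i).2 (hy i).2⟩

lemma abs_apply_le_supNorm (v : EuclideanSpace ℝ (Fin d)) (i : Fin d) : |v i| ≤ supNorm v :=
  le_ciSup (f := fun j => |v j|) (Set.finite_range _).bddAbove i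

lemma apply_le_supNorm (v : EuclideanSpace ℝ (Fin d)) (i : Fin d) : v i ≤ supNorm v :=
  (le_abs_self _).trans (abs_apply_le_supNorm v i)

lemma supNorm_nonneg (v : EuclideanSpace ℝ (Fin d)) : 0 ≤ supNorm v :=
  Real.iSup_nonneg fun _ => abs_nonneg _

lemma supNorm_le {v : EuclideanSpace ℝ (Fin d)} {c : ℝ} (hc : 0 ≤ c)
    (hv : ∀ i, |v i| ≤ c) : supNorm v ≤ c :=
  Real.iSup_le hv hc

lemma supNorm_le_one {v : EuclideanSpace ℝ (Fin d)} (hv : v ∈ unitBox d) : supNorm v ≤ 1 :=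
  supNorm_le zero_le_one fun i => abs_le.2 ⟨by linarith [(hv i).1], (hv i).2⟩

lemma lineMap_mem_unitBox {x u : EuclideanSpace ℝ (Fin d)} (hx : x ∈ unitBox d)
    (hu : u ∈ unitBox d) {t : ℝ} (ht : t ∈ Set.Icc (0 : ℝ) 1) :
    t • (x - u) + u ∈ unitBox d := by
  intro i
  simp only [PiLp.add_apply, PiLp.smul_apply, PiLp.sub_apply, smul_eq_mul, Set.mem_Icc]
  obtain ⟨hx0, hx1⟩ := hx i
  obtain ⟨hu0, hu1⟩ := hu i
  obtain ⟨ht0, ht1⟩ := ht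
  constructor <;> nlinarith

lemma supNorm_lineMap_le {x u : EuclideanSpace ℝ (Fin d)} (hx : x ∈ unitBox d)
    (hu : u ∈ unitBox d) {t : ℝ} (ht : t ∈ Set.Icc (0 : ℝ) 1) :
    supNorm (t • (x - u) + u) ≤ t + (1 - t) * supNorm u := by
  obtain ⟨ht0, ht1⟩ := ht
  refine supNorm_le (by nlinarith [supNorm_nonneg u]) fun i => ?_
  rw [abs_of_nonneg (lineMap_mem_unitBox hx hu ⟨ht0, ht1⟩ i).1]
  simp only [PiLp.add_apply, PiLp.smul_apply, PiLp.sub_apply, smul_eq_mul]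
  nlinarith [(hx i).2, apply_le_supNorm u i]

/-- If `y ≤ w ≤ p` lie on one ray with `p - w = c (w - y)`, up-concavity bounds `f` at the
middle point from below by the chord through `(y, f y)` and `(p, 0)`. -/
lemma mul_le_of_upConcaveOn {f : EuclideanSpace ℝ (Fin d) → ℝ}
    {g : EuclideanSpace ℝ (Fin d) → EuclideanSpace ℝ (Fin d)}
    {s : Set (EuclideanSpace ℝ (Fin d))} (hf : UpConcaveOn f g s)
    {y w p : EuclideanSpace ℝ (Fin d)} (hy : y ∈ s) (hw : w ∈ s) (hp : p ∈ s)
    (hyw : ∀ i, y i ≤ w i) (hwp : ∀ i, w i ≤ p i) {c : ℝ} (hc : 0 ≤ c)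
    (hpw : p - w = c • (w - y)) (hfp : 0 ≤ f p) :
    c * f y ≤ (1 + c) * f w := by
  have hlower := (hf y hy w hw hyw).1
  have hupper := (hf w hw p hp hwp).2
  rw [hpw, real_inner_smul_right] at hupper
  nlinarith [mul_le_mul_of_nonneg_left hlower hc]

lemma vecSup_sub_apply_le {v y : EuclideanSpace ℝ (Fin d)} (hv : v ∈ unitBox d)
    (hy : y ∈ unitBox d) (i : Fin d) : vecSup v y i - y i ≤ supNorm v * (1 - y i) := by
  rw [vecSup_apply]
  have hm := supNorm_le_one hv
  rcases le_total (v i) (y i) with h | h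
  · rw [max_eq_right h]
    nlinarith [(hy i).2, supNorm_nonneg v]
  · rw [max_eq_left h]
    nlinarith [(hy i).1, apply_le_supNorm v i]

lemma extend_vecSup_mem_unitBox {v y : EuclideanSpace ℝ (Fin d)} (hv : v ∈ unitBox d)
    (hy : y ∈ unitBox d) (hm : 0 < supNorm v) :
    y + (supNorm v)⁻¹ • (vecSup v y - y) ∈ unitBox d := by
  intro i
  have hle := vecSup_sub_apply_le hv hy i
  have hnonneg : 0 ≤ vecSup v y i - y i :=
    sub_nonneg.2 (le_max_right (v i) (y i))
  have hscaled : (supNorm v)⁻¹ * (vecSup v y i - y i) ≤ 1 - y i :=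
    (inv_mul_le_iff₀ hm).2 hle
  simp only [PiLp.add_apply, PiLp.smul_apply, PiLp.sub_apply, smul_eq_mul, Set.mem_Icc]
  constructor
  · nlinarith [(hy i).1, mul_nonneg (inv_nonneg.2 hm.le) hnonneg]
  · linarith

theorem one_sub_supNorm_mul_le_vecSup {f : EuclideanSpace ℝ (Fin d) → ℝ}
    {g : EuclideanSpace ℝ (Fin d) → EuclideanSpace ℝ (Fin d)}
    (hf : UpConcaveOn f g (unitBox d)) (hnonneg : ∀ x ∈ unitBox d, 0 ≤ f x)
    {v y : EuclideanSpace ℝ (Fin d)} (hv : v ∈ unitBox d) (hy : y ∈ unitBox d) :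
    (1 - supNorm v) * f y ≤ f (vecSup v y) := by
  set m := supNorm v
  set w := vecSup v y
  have hw : w ∈ unitBox d := vecSup_mem_unitBox hv hy
  have hm_nonneg : 0 ≤ m := supNorm_nonneg v
  have hm_le_one : m ≤ 1 := supNorm_le_one hv
  rcases hm_nonneg.eq_or_lt with hm0 | hm0
  · have hwy : w = y := by
      ext i
      exact max_eq_right ((apply_le_supNorm v i).trans (hm0.symm.trans_le (hy i).1))
    rw [hwy, ← hm0, sub_zero, one_mul]
  rcases hm_le_one.eq_or_lt with hm1 | hm1
  · rw [hm1, sub_self, zero_mul]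
    exact hnonneg w hw
  set p := y + m⁻¹ • (w - y)
  have hp : p ∈ unitBox d := extend_vecSup_mem_unitBox hv hy hm0
  have hyw : ∀ i, y i ≤ w i := fun i => le_max_right (v i) (y i)
  have hinv : 1 ≤ m⁻¹ := (one_le_inv₀ hm0).2 hm1.le
  have hwp : ∀ i, w i ≤ p i := by
    intro i
    simp only [p, PiLp.add_apply, PiLp.smul_apply, PiLp.sub_apply, smul_eq_mul]
    nlinarith [hyw i]
  have hpw : p - w = (m⁻¹ - 1) • (w - y) := by module
  have hchord := mul_le_of_upConcaveOn hf hy hw hp hyw hwp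
    (sub_nonneg.2 hinv) hpw (hnonneg p hp)
  have hscaled := mul_le_mul_of_nonneg_left hchord hm0.le
  field_simp at hscaled
  linarith

theorem f_join_lower_bound_shifted_general
    (d : ℕ)
    (f : EuclideanSpace ℝ (Fin d) → ℝ)
    (g : EuclideanSpace ℝ (Fin d) → EuclideanSpace ℝ (Fin d))
    (hnonneg : ∀ x ∈ unitBox d, 0 ≤ f x)
    (hupconcave : ∀ a ∈ unitBox d, ∀ b ∈ unitBox d, (∀ i, a i ≤ b i) →
      ⟪g b, b - a⟫ ≤ f b - f a ∧ f b - f a ≤ ⟪g a, b - a⟫)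
    (u : EuclideanSpace ℝ (Fin d)) (hu : u ∈ unitBox d) :
    ∀ x ∈ unitBox d, ∀ y ∈ unitBox d, ∀ z ∈ Set.Icc (0 : ℝ) 1,
      (1 - z / 2) * (1 - supNorm u) * f y ≤ f (vecSup ((z / 2) • (x - u) + u) y) := by
  intro x hx y hy z ⟨hz0, hz1⟩
  have ht : z / 2 ∈ Set.Icc (0 : ℝ) 1 := ⟨by linarith, by linarith⟩
  have hnorm := supNorm_lineMap_le hx hu ht
  calc (1 - z / 2) * (1 - supNorm u) * f y
      ≤ (1 - supNorm ((z / 2) • (x - u) + u)) * f y :=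
        mul_le_mul_of_nonneg_right (by linarith) (hnonneg y hy)
    _ ≤ _ :=
      one_sub_supNorm_mul_le_vecSup hupconcave hnonneg (lineMap_mem_unitBox hx hu ht) hy

/-- For `f : [0,1]^d → ℝ` non-negative, differentiable and up-concave, base point
`u ∈ [0,1]^d`, and `x_z = (z/2)·(x − u) + u`: for all `x, y ∈ [0,1]^d` and `z ∈ [0,1]`,
`f(x_z ∨ y) ≥ (1 − z/2)(1 − ‖u‖_∞) f(y)`. -/
theorem f_join_lower_bound_shifted
    (d : ℕ)
    (f : EuclideanSpace ℝ (Fin d) → ℝ)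
    (g : EuclideanSpace ℝ (Fin d) → EuclideanSpace ℝ (Fin d))
    (hderiv : ∀ x ∈ unitBox d, HasGradientAt f (g x) x)
    (hnonneg : ∀ x ∈ unitBox d, 0 ≤ f x)
    (hupconcave : ∀ a ∈ unitBox d, ∀ b ∈ unitBox d, (∀ i, a i ≤ b i) →
      ⟪g b, b - a⟫ ≤ f b - f a ∧ f b - f a ≤ ⟪g a, b - a⟫)
    (u : EuclideanSpace ℝ (Fin d)) (hu : u ∈ unitBox d) :
    ∀ x ∈ unitBox d, ∀ y ∈ unitBox d, ∀ z ∈ Set.Icc (0 : ℝ) 1,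
      (1 - z / 2) * (1 - supNorm u) * f y ≤ f (vecSup ((z / 2) • (x - u) + u) y) :=
  f_join_lower_bound_shifted_general d f g hnonneg hupconcave u hu
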